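/- arXiv:1508.07902 — 3 statements merged into one kernel-verified Lean document; each statement's English description precedes it below -/
import Mathlib

section
/- Fix a test labeling y ∈ X, let p ∈ P^{2,y} be defined by sets Y_u ⊆ X_u \ {y_u}, and let g = f − [p]^T f. Let Λ be the local polytope and let φ be a dual feasible vector for min_{μ∈Λ} ⟨g, μ⟩ satisfying the normalization min_{i∈X_u} g^φ_u(i) = 0 for all u ∈ V and min_{i,j} g^φ_{uv}(i,j) = 0 for all uv ∈ E, such that g^φ is arc consistent. If O_v(φ) ∩ Y_v = ∅ for every v ∈ V, where O_v(φ) = {i ∈ X_v : g^φ_v(i) = 0}, then φ is dual optimal: g^φ_∅ = min_{μ∈Λ} ⟨g, μ⟩ = 0. -/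
open Finset

noncomputable section

variable {V : Type*} [Fintype V] [DecidableEq V]
variable {X : V → Type*} [∀ v, Fintype (X v)] [∀ v, DecidableEq (X v)]
variable {E : Finset (V × V)}

/-- The index set `I`: the constant component `∅`, unary components `(u, i)` and
pairwise components `(uv, ij)` for edges `uv ∈ E`. -/
abbrev GIdx (X : V → Type*) (E : Finset (V × V)) : Type _ :=
  Unit ⊕ (Σ v : V, X v) ⊕ (Σ e : {e : V × V // e ∈ E}, X e.1.1 × X e.1.2)

/-- Vectors in `ℝ^I` (cost vectors and relaxed labelings live in the same space). -/
abbrev GVec (X : V → Type*) (E : Finset (V × V)) : Type _ := GIdx X E → ℝ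

/-- Index of the constant component. -/
def cIdx : GIdx X E := Sum.inl ()

/-- Index of the unary component `(v, i)`. -/
def uIdx (v : V) (i : X v) : GIdx X E := Sum.inr (Sum.inl ⟨v, i⟩)

/-- Index of the pairwise component `(uv, ij)` of the edge `e = uv ∈ E`. -/
def pIdx (e : {e : V × V // e ∈ E}) (i : X e.1.1) (j : X e.1.2) : GIdx X E :=
  Sum.inr (Sum.inr ⟨e, (i, j)⟩)

/-- The energy `E_f(x) = f_∅ + Σ_v f_v(x_v) + Σ_{uv∈E} f_{uv}(x_u,x_v)`. -/
def energy (f : GVec X E) (x : ∀ v, X v) : ℝ :=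
  f cIdx + ∑ v : V, f (uIdx v (x v)) +
    ∑ e : {e : V × V // e ∈ E}, f (pIdx e (x e.1.1) (x e.1.2))

/-- The standard inner product on `ℝ^I`. -/
def dotp (f μ : GVec X E) : ℝ := ∑ idx : GIdx X E, f idx * μ idx

/-- The lifting (overcomplete representation) `δ : X → ℝ^I`. -/
def lift (x : ∀ v, X v) : GVec X E := fun idx =>
  match idx with
  | Sum.inl _ => 1
  | Sum.inr (Sum.inl ⟨v, i⟩) => if x v = i then 1 else 0
  | Sum.inr (Sum.inr ⟨e, (i, j)⟩) => if x e.1.1 = i ∧ x e.1.2 = j then 1 else 0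

/-- Application of a node-wise substitution to a labeling: `p(x)_v = p_v(x_v)`. -/
def applySub (p : ∀ v, X v → X v) (x : ∀ v, X v) : ∀ v, X v := fun v => p v (x v)

/-- All the component maps `p_v` are idempotent. -/
def NodewiseIdem (p : ∀ v, X v → X v) : Prop := ∀ (v : V) (i : X v), p v (p v i) = p v i

/-- `p` is strictly improving for the cost vector `f`:
`E_f(p(x)) < E_f(x)` whenever `p(x) ≠ x`. -/
def StrictlyImproving (f : GVec X E) (p : ∀ v, X v → X v) : Prop :=
  ∀ x : ∀ v, X v, applySub p x ≠ x → energy f (applySub p x) < energy f x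

/-- The adjoint `[p]ᵀ` of the linear extension of a node-wise substitution `p`,
acting on cost vectors: `([p]ᵀ f)_∅ = f_∅`, `([p]ᵀ f)_u(i) = f_u(p_u(i))`,
`([p]ᵀ f)_{uv}(i,j) = f_{uv}(p_u(i), p_v(j))`. -/
def Padj (p : ∀ v, X v → X v) (f : GVec X E) : GVec X E := fun idx =>
  match idx with
  | Sum.inl _ => f cIdx
  | Sum.inr (Sum.inl ⟨v, i⟩) => f (uIdx v (p v i))
  | Sum.inr (Sum.inr ⟨e, (i, j)⟩) => f (pIdx e (p e.1.1 i) (p e.1.2 j))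

/-- The linear extension `[p] : ℝ^I → ℝ^I` of a node-wise substitution `p`
(the adjoint of `Padj p` with respect to `dotp`): it satisfies `δ(p(x)) = [p] δ(x)`. -/
def Pmap (p : ∀ v, X v → X v) (μ : GVec X E) : GVec X E := fun idx =>
  match idx with
  | Sum.inl _ => μ cIdx
  | Sum.inr (Sum.inl ⟨v, i⟩) => ∑ i' : X v, if p v i' = i then μ (uIdx v i') else 0
  | Sum.inr (Sum.inr ⟨e, (i, j)⟩) =>
      ∑ i' : X e.1.1, ∑ j' : X e.1.2,
        if p e.1.1 i' = i ∧ p e.1.2 j' = j then μ (pIdx e i' j') else 0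

/-- `p` is strictly `Λ`-improving for `f` (`p ∈ S_f`):
`min_{μ∈Λ} ⟨f − [p]ᵀf, μ⟩ = 0` and every minimizer `μ` satisfies `[p]μ = μ`. -/
def StrictlyLambdaImproving (Λ : Set (GVec X E)) (f : GVec X E)
    (p : ∀ v, X v → X v) : Prop :=
  IsLeast {r : ℝ | ∃ μ ∈ Λ, dotp (f - Padj p f) μ = r} 0 ∧
    ∀ μ ∈ Λ, dotp (f - Padj p f) μ = 0 → Pmap p μ = μ

/-- The subset-to-one substitution determined by a test labeling `y` and
sets `Y_v` of labels replaced by `y_v`. -/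
def subToOne (y : ∀ v, X v) (Y : ∀ v, Finset (X v)) : ∀ v, X v → X v :=
  fun v i => if i ∈ Y v then y v else i

/-- Membership in the class `P^{2,y}` of subset-to-one substitutions. -/
def InPtwo (y : ∀ v, X v) (p : ∀ v, X v → X v) : Prop :=
  ∃ Y : ∀ v, Finset (X v), (∀ v, y v ∉ Y v) ∧
    ∀ (v : V) (i : X v), p v i = if i ∈ Y v then y v else i

/-- The local polytope `Λ`. -/
def localPolytope (X : V → Type*) [∀ v, Fintype (X v)] (E : Finset (V × V)) :
    Set (GVec X E) :=
  { μ | (∀ idx, 0 ≤ μ idx) ∧ μ cIdx = 1 ∧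
      (∀ u : V, ∑ i : X u, μ (uIdx u i) = μ cIdx) ∧
      (∀ (e : {e : V × V // e ∈ E}) (i : X e.1.1),
        ∑ j : X e.1.2, μ (pIdx e i j) = μ (uIdx e.1.1 i)) ∧
      (∀ (e : {e : V × V // e ∈ E}) (j : X e.1.2),
        ∑ i : X e.1.1, μ (pIdx e i j) = μ (uIdx e.1.2 j)) }

/-- A dual vector `φ`: for each edge `uv ∈ E` messages `φ_{uv} : X_u → ℝ` (to the tail)
and `φ_{vu} : X_v → ℝ` (to the head), and a number `φ_u` for every node. -/
structure GDual (X : V → Type*) (E : Finset (V × V)) where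
  fwd : ∀ e : {e : V × V // e ∈ E}, X e.1.1 → ℝ
  bwd : ∀ e : {e : V × V // e ∈ E}, X e.1.2 → ℝ
  nd : V → ℝ

/-- Reparametrized unary cost `g^φ_u(i) = g_u(i) + Σ_{v∈nb(u)} φ_{uv}(i) − φ_u`. -/
def repUn (g : GVec X E) (φ : GDual X E) (u : V) (i : X u) : ℝ :=
  g (uIdx u i) +
    (∑ e : {e : V × V // e ∈ E},
      ((if h : e.1.1 = u then φ.fwd e (cast (congrArg X h.symm) i) else 0) +
        (if h : e.1.2 = u then φ.bwd e (cast (congrArg X h.symm) i) else 0))) -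
    φ.nd u

/-- Reparametrized pairwise cost `g^φ_{uv}(i,j) = g_{uv}(i,j) − φ_{uv}(i) − φ_{vu}(j)`. -/
def repPw (g : GVec X E) (φ : GDual X E) (e : {e : V × V // e ∈ E})
    (i : X e.1.1) (j : X e.1.2) : ℝ :=
  g (pIdx e i j) - φ.fwd e i - φ.bwd e j

/-- Reparametrized constant `g^φ_∅ = g_∅ + Σ_u φ_u` (the dual lower bound). -/
def repC (g : GVec X E) (φ : GDual X E) : ℝ := g cIdx + ∑ u : V, φ.nd u

/-- Dual feasibility: `g^φ ≥ 0` componentwise. -/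
def DualFeasible (g : GVec X E) (φ : GDual X E) : Prop :=
  (∀ (u : V) (i : X u), 0 ≤ repUn g φ u i) ∧
    ∀ (e : {e : V × V // e ∈ E}) (i : X e.1.1) (j : X e.1.2), 0 ≤ repPw g φ e i j

/-- Arc consistency of the reparametrized cost `g^φ`. -/
def ArcConsistent (g : GVec X E) (φ : GDual X E) : Prop :=
  (∀ (e : {e : V × V // e ∈ E}) (i : X e.1.1) (j : X e.1.2),
      repPw g φ e i j = 0 → repUn g φ e.1.1 i = 0 ∧ repUn g φ e.1.2 j = 0) ∧
  (∀ (e : {e : V × V // e ∈ E}) (i : X e.1.1),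
      repUn g φ e.1.1 i = 0 → ∃ j : X e.1.2, repPw g φ e i j = 0) ∧
  (∀ (e : {e : V × V // e ∈ E}) (j : X e.1.2),
      repUn g φ e.1.2 j = 0 → ∃ i : X e.1.1, repPw g φ e i j = 0)

/-- The reduced cost vector `ḡ` associated with the subset-to-one substitution `p ∈ P^{2,y}`
given by the sets `Y_v` (where `g = f − [p]ᵀ f`). -/
def reduced (f : GVec X E) (y : ∀ v, X v) (Y : ∀ v, Finset (X v)) : GVec X E :=
  fun idx =>
    match idx with
    | Sum.inl _ => 0
    | Sum.inr (Sum.inl ⟨v, i⟩) => (f - Padj (subToOne y Y) f) (uIdx v i)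
    | Sum.inr (Sum.inr ⟨e, (i, j)⟩) =>
        let g : GVec X E := f - Padj (subToOne y Y) f
        let dvu : ℝ := sInf ((fun i' => g (pIdx e i' j)) '' {i' : X e.1.1 | i' ∉ Y e.1.1})
        let duv : ℝ := sInf ((fun j' => g (pIdx e i j')) '' {j' : X e.1.2 | j' ∉ Y e.1.2})
        if i ∈ Y e.1.1 then
          if j ∈ Y e.1.2 then min (dvu + duv) (g (pIdx e i j)) else duv
        else if j ∈ Y e.1.2 then dvu else 0


section myaux
variable {V : Type*} [Fintype V] [DecidableEq V]
variable {X : V → Type*} [∀ v, Fintype (X v)] [∀ v, DecidableEq (X v)]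
variable {E : Finset (V × V)}

lemma my_dotp_expand (g μ : GVec X E) :
    dotp g μ = g cIdx * μ cIdx
      + (∑ v : V, ∑ i : X v, g (uIdx v i) * μ (uIdx v i))
      + ∑ e : {e : V × V // e ∈ E}, ∑ i : X e.1.1, ∑ j : X e.1.2,
          g (pIdx e i j) * μ (pIdx e i j) := by
  rw [dotp, Fintype.sum_sum_type, Fintype.sum_sum_type, add_assoc]
  congr 1
  · simp [cIdx]
  congr 1
  · rw [← Finset.univ_sigma_univ, Finset.sum_sigma]
    rfl
  · rw [← Finset.univ_sigma_univ, Finset.sum_sigma]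
    refine Finset.sum_congr rfl fun e _ => ?_
    rw [Fintype.sum_prod_type]
    rfl

lemma my_dite_fwd (φ : GDual X E) (μ : GVec X E) (e : {e : V × V // e ∈ E}) :
    (∑ v : V, ∑ i : X v,
      (if h : e.1.1 = v then φ.fwd e (cast (congrArg X h.symm) i) else 0) * μ (uIdx v i))
    = ∑ i : X e.1.1, φ.fwd e i * μ (uIdx e.1.1 i) := by
  rw [Finset.sum_eq_single e.1.1]
  · exact Finset.sum_congr rfl fun i _ => by rw [dif_pos rfl, cast_eq]
  · intro v _ hv
    exact Finset.sum_eq_zero fun i _ => by rw [dif_neg (fun h => hv h.symm), zero_mul]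
  · simp

lemma my_dite_bwd (φ : GDual X E) (μ : GVec X E) (e : {e : V × V // e ∈ E}) :
    (∑ v : V, ∑ i : X v,
      (if h : e.1.2 = v then φ.bwd e (cast (congrArg X h.symm) i) else 0) * μ (uIdx v i))
    = ∑ j : X e.1.2, φ.bwd e j * μ (uIdx e.1.2 j) := by
  rw [Finset.sum_eq_single e.1.2]
  · exact Finset.sum_congr rfl fun i _ => by rw [dif_pos rfl, cast_eq]
  · intro v _ hv
    exact Finset.sum_eq_zero fun i _ => by rw [dif_neg (fun h => hv h.symm), zero_mul]
  · simp

lemma my_swap1 (F : (v : V) → X v → {e : V × V // e ∈ E} → ℝ) :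
    (∑ v : V, ∑ i : X v, ∑ e : {e : V × V // e ∈ E}, F v i e)
    = ∑ e : {e : V × V // e ∈ E}, ∑ v : V, ∑ i : X v, F v i e := by
  have h : ∀ v : V, ∑ i : X v, ∑ e : {e : V × V // e ∈ E}, F v i e
      = ∑ e : {e : V × V // e ∈ E}, ∑ i : X v, F v i e := fun v => Finset.sum_comm
  simp only [h]
  exact Finset.sum_comm

lemma my_cross (φ : GDual X E) (μ : GVec X E) :
    (∑ v : V, ∑ i : X v,
      ((∑ e : {e : V × V // e ∈ E},
          if h : e.1.1 = v then φ.fwd e (cast (congrArg X h.symm) i) else 0) +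
        (∑ e : {e : V × V // e ∈ E},
          if h : e.1.2 = v then φ.bwd e (cast (congrArg X h.symm) i) else 0)) * μ (uIdx v i))
    = (∑ e : {e : V × V // e ∈ E}, ∑ i : X e.1.1, φ.fwd e i * μ (uIdx e.1.1 i)) +
      (∑ e : {e : V × V // e ∈ E}, ∑ j : X e.1.2, φ.bwd e j * μ (uIdx e.1.2 j)) := by
  simp only [add_mul, Finset.sum_mul, Finset.sum_add_distrib]
  rw [my_swap1, my_swap1]
  congr 1
  · exact Finset.sum_congr rfl fun e _ => my_dite_fwd φ μ e
  · exact Finset.sum_congr rfl fun e _ => my_dite_bwd φ μ e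

lemma my_repar (g : GVec X E) (φ : GDual X E) (μ : GVec X E)
    (hμ : μ ∈ localPolytope X E) :
    dotp g μ = repC g φ
      + (∑ v : V, ∑ i : X v, repUn g φ v i * μ (uIdx v i))
      + ∑ e : {e : V × V // e ∈ E}, ∑ i : X e.1.1, ∑ j : X e.1.2,
          repPw g φ e i j * μ (pIdx e i j) := by
  obtain ⟨hpos, hc, hu, hm1, hm2⟩ := hμ
  have hS1 : ∀ v : V, ∑ i : X v, repUn g φ v i * μ (uIdx v i)
      = (∑ i : X v, g (uIdx v i) * μ (uIdx v i))
        + (∑ i : X v,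
            (∑ e : {e : V × V // e ∈ E},
              ((if h : e.1.1 = v then φ.fwd e (cast (congrArg X h.symm) i) else 0) +
                (if h : e.1.2 = v then φ.bwd e (cast (congrArg X h.symm) i) else 0)))
              * μ (uIdx v i))
        - φ.nd v := by
    intro v
    have expand : ∀ i : X v, repUn g φ v i * μ (uIdx v i)
        = g (uIdx v i) * μ (uIdx v i)
          + (∑ e : {e : V × V // e ∈ E},
              ((if h : e.1.1 = v then φ.fwd e (cast (congrArg X h.symm) i) else 0) +
                (if h : e.1.2 = v then φ.bwd e (cast (congrArg X h.symm) i) else 0)))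
              * μ (uIdx v i)
          - φ.nd v * μ (uIdx v i) := by
      intro i
      rw [repUn]
      ring
    simp only [expand]
    rw [Finset.sum_sub_distrib, Finset.sum_add_distrib, ← Finset.mul_sum, hu v, hc, mul_one]
  have hS2 : ∀ e : {e : V × V // e ∈ E},
      ∑ i : X e.1.1, ∑ j : X e.1.2, repPw g φ e i j * μ (pIdx e i j)
      = (∑ i : X e.1.1, ∑ j : X e.1.2, g (pIdx e i j) * μ (pIdx e i j))
        - (∑ i : X e.1.1, φ.fwd e i * μ (uIdx e.1.1 i))
        - (∑ j : X e.1.2, φ.bwd e j * μ (uIdx e.1.2 j)) := by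
    intro e
    have expand : ∀ (i : X e.1.1) (j : X e.1.2), repPw g φ e i j * μ (pIdx e i j)
        = g (pIdx e i j) * μ (pIdx e i j)
          - φ.fwd e i * μ (pIdx e i j) - φ.bwd e j * μ (pIdx e i j) := by
      intro i j
      rw [repPw]
      ring
    simp only [expand, Finset.sum_sub_distrib]
    congr 1
    · congr 1
      refine Finset.sum_congr rfl fun i _ => ?_
      rw [← Finset.mul_sum, hm1]
    · rw [Finset.sum_comm]
      refine Finset.sum_congr rfl fun j _ => ?_
      rw [← Finset.mul_sum, hm2]
  rw [my_dotp_expand]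
  simp only [hS1, hS2, Finset.sum_sub_distrib, Finset.sum_add_distrib]
  rw [my_cross, repC, hc, mul_one]
  ring

lemma my_lift_mem (x : ∀ v, X v) : lift x ∈ localPolytope X E := by
  refine ⟨?_, rfl, ?_, ?_, ?_⟩
  · intro idx
    rcases idx with _ | ⟨v, i⟩ | ⟨e, i, j⟩ <;> dsimp [lift]
    · norm_num
    · split <;> norm_num
    · split <;> norm_num
  · intro u
    simp [lift, uIdx, cIdx]
  · intro e i
    simp [lift, uIdx, pIdx, ite_and]
  · intro e j
    simp [lift, pIdx, uIdx, ite_and, Finset.sum_ite_eq]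
end myaux

theorem arc_consistent_dual_with_no_pruning_is_optimal
    [∀ v, Nonempty (X v)]
    (f : GVec X E) (y : ∀ v, X v) (Y : ∀ v, Finset (X v)) (hY : ∀ v, y v ∉ Y v)
    (g : GVec X E) (hg : g = f - Padj (subToOne y Y) f)
    (φ : GDual X E)
    (hfeas : DualFeasible g φ)
    (hnormU : ∀ u : V, ∃ i : X u, repUn g φ u i = 0)
    (hnormP : ∀ e : {e : V × V // e ∈ E},
      ∃ (i : X e.1.1) (j : X e.1.2), repPw g φ e i j = 0)
    (hac : ArcConsistent g φ)
    (hnoprune : ∀ v : V, ∀ i ∈ Y v, repUn g φ v i ≠ 0) :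
    repC g φ = 0 ∧ IsLeast ((fun μ => dotp g μ) '' localPolytope X E) 0 := by
  classical
  set p := subToOne y Y with hp
  -- the labeling of zero unary reparametrized costs
  have hx : ∀ v : V, repUn g φ v ((hnormU v).choose) = 0 := fun v => (hnormU v).choose_spec
  set x : ∀ v, X v := fun v => (hnormU v).choose with hxdef
  have hx : ∀ v : V, repUn g φ v (x v) = 0 := hx
  have hxY : ∀ v : V, x v ∉ Y v := fun v h => hnoprune v (x v) h (hx v)
  -- components of g vanish outside Y
  have hgc : g cIdx = 0 := by
    rw [hg]
    show f cIdx - Padj (subToOne y Y) f cIdx = 0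
    simp [Padj, cIdx]
  have hgu : ∀ (v : V) (i : X v), i ∉ Y v → g (uIdx v i) = 0 := by
    intro v i hi
    rw [hg]
    show f (uIdx v i) - Padj (subToOne y Y) f (uIdx v i) = 0
    simp [Padj, uIdx, subToOne, hi]
  have hgp : ∀ (e : {e : V × V // e ∈ E}) (i : X e.1.1) (j : X e.1.2),
      i ∉ Y e.1.1 → j ∉ Y e.1.2 → g (pIdx e i j) = 0 := by
    intro e i j hi hj
    rw [hg]
    show f (pIdx e i j) - Padj (subToOne y Y) f (pIdx e i j) = 0
    simp [Padj, pIdx, subToOne, hi, hj]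
  have hrepw : ∀ (e : {e : V × V // e ∈ E}) (i : X e.1.1) (j : X e.1.2),
      i ∉ Y e.1.1 → j ∉ Y e.1.2 → repPw g φ e i j = - φ.fwd e i - φ.bwd e j := by
    intro e i j hi hj
    rw [repPw, hgp e i j hi hj]
    ring
  -- the pairwise reparametrized costs vanish at x
  have hkey : ∀ e : {e : V × V // e ∈ E}, repPw g φ e (x e.1.1) (x e.1.2) = 0 := by
    intro e
    obtain ⟨j₀, hj₀⟩ := hac.2.1 e (x e.1.1) (hx _)
    obtain ⟨i₀, hi₀⟩ := hac.2.2 e (x e.1.2) (hx _)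
    have hj₀Y : j₀ ∉ Y e.1.2 := fun h => hnoprune _ _ h ((hac.1 e _ _ hj₀).2)
    have hi₀Y : i₀ ∉ Y e.1.1 := fun h => hnoprune _ _ h ((hac.1 e _ _ hi₀).1)
    have h1 := hrepw e _ _ (hxY _) hj₀Y
    have h2 := hrepw e _ _ hi₀Y (hxY _)
    have h3 := hrepw e _ _ hi₀Y hj₀Y
    have h4 := hrepw e _ _ (hxY e.1.1) (hxY e.1.2)
    have p3 := hfeas.2 e i₀ j₀
    have p4 := hfeas.2 e (x e.1.1) (x e.1.2)
    rw [h1] at hj₀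
    rw [h2] at hi₀
    rw [h3] at p3
    rw [h4] at p4 ⊢
    linarith
  -- compute dotp g (lift x) in two ways
  have hmem := my_lift_mem (E := E) x
  have e1 : ∀ v : V, ∑ i : X v, repUn g φ v i * lift (E := E) x (uIdx v i) = 0 := by
    intro v
    have : ∑ i : X v, repUn g φ v i * lift (E := E) x (uIdx v i) = repUn g φ v (x v) := by
      simp [lift, uIdx, mul_ite, Finset.sum_ite_eq]
    rw [this, hx v]
  have e2 : ∀ e : {e : V × V // e ∈ E},
      ∑ i : X e.1.1, ∑ j : X e.1.2, repPw g φ e i j * lift (E := E) x (pIdx e i j) = 0 := by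
    intro e
    have : ∑ i : X e.1.1, ∑ j : X e.1.2, repPw g φ e i j * lift (E := E) x (pIdx e i j)
        = repPw g φ e (x e.1.1) (x e.1.2) := by
      simp [lift, pIdx, mul_ite, ite_and, Finset.sum_ite_eq]
    rw [this, hkey e]
  have hdot0 : dotp g (lift x) = 0 := by
    rw [my_dotp_expand, hgc]
    have u0 : ∀ v : V, ∑ i : X v, g (uIdx v i) * lift (E := E) x (uIdx v i) = 0 := by
      intro v
      have : ∑ i : X v, g (uIdx v i) * lift (E := E) x (uIdx v i) = g (uIdx v (x v)) := by
        simp [lift, uIdx, mul_ite, Finset.sum_ite_eq]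
      rw [this, hgu v (x v) (hxY v)]
    have p0 : ∀ e : {e : V × V // e ∈ E},
        ∑ i : X e.1.1, ∑ j : X e.1.2, g (pIdx e i j) * lift (E := E) x (pIdx e i j) = 0 := by
      intro e
      have : ∑ i : X e.1.1, ∑ j : X e.1.2, g (pIdx e i j) * lift (E := E) x (pIdx e i j)
          = g (pIdx e (x e.1.1) (x e.1.2)) := by
        simp [lift, pIdx, mul_ite, ite_and, Finset.sum_ite_eq]
      rw [this, hgp e _ _ (hxY e.1.1) (hxY e.1.2)]
    simp [u0, p0]
  have hrep := my_repar g φ (lift x) hmem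
  simp only [e1, e2, Finset.sum_const_zero, add_zero] at hrep
  have hrepC : repC g φ = 0 := by rw [← hrep, hdot0]
  refine ⟨hrepC, ⟨⟨lift x, hmem, hdot0⟩, ?_⟩⟩
  rintro r ⟨μ, hμ, rfl⟩
  show 0 ≤ dotp g μ
  rw [my_repar g φ μ hμ, hrepC, zero_add]
  have hpos := hμ.1
  refine add_nonneg ?_ ?_
  · refine Finset.sum_nonneg fun v _ => Finset.sum_nonneg fun i _ =>
      mul_nonneg (hfeas.1 v i) (hpos _)
  · refine Finset.sum_nonneg fun e _ => Finset.sum_nonneg fun i _ =>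
      Finset.sum_nonneg fun j _ => mul_nonneg (hfeas.2 e i j) (hpos _)


end
end

section
/- Fix a test labeling y ∈ X, let p ∈ P^{2,y} be defined by sets Y_v ⊆ X_v \ {y_v}, and let ḡ be the reduced cost vector for p. Let Λ be the local polytope and let φ be a dual vector satisfying min_{i∈X_u} ḡ^φ_u(i) = 0 for every u ∈ V and, for every uv ∈ E, every i ∈ X_u and every j ∈ X_v, min_{i'∈X_u} ḡ^φ_{uv}(i',j) = 0 and min_{j'∈X_v} ḡ^φ_{uv}(i,j') = 0. Then at least one of the following holds: (a) ḡ^φ_∅ = 0, φ is dual optimal for min_{μ∈Λ} ⟨ḡ, μ⟩, and δ(y) is a primal optimal solution (min_{μ∈Λ} ⟨ḡ, μ⟩ = ⟨ḡ, δ(y)⟩ = 0); (b) there exists u ∈ V with O_u(φ) ∩ Y_u ≠ ∅, where O_u(φ) = {i ∈ X_u : ḡ^φ_u(i) = 0}. -/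
open Finset

/-! If some `Y_u` contains a label of zero reparametrized unary cost we are in case (b).
Otherwise choose such zero labels `x_u ∉ Y_u`. The reduced cost vanishes on every labeling
avoiding the sets `Y_u`, in particular on `x` and on `y`. On each edge the reparametrized
pairwise cost also vanishes at `(x_u, x_v)`: the block form of `ḡ_{uv}`, whose entries on
`Y_u × Y_v` are at most `Δ_{vu}(j) + Δ_{uv}(i)`, forces this once every row and column has a
zero. Since the energy of `x` equals `ḡ^φ_∅` plus the reparametrized costs along `x`, we get
`ḡ^φ_∅ = 0 = ⟨ḡ, δ(y)⟩`, and weak duality makes both optimal. -/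

section

variable {V : Type*} {X : V → Type*} {E : Finset (V × V)}

section Messages

variable [DecidableEq V]

/-- `inMsg φ u i = Σ_{v ∈ nb(u)} φ_{uv}(i)`. -/
def inMsg (φ : GDual X E) (u : V) (i : X u) : ℝ :=
  ∑ e : {e : V × V // e ∈ E},
    ((if h : e.1.1 = u then φ.fwd e (cast (congrArg X h.symm) i) else 0) +
      (if h : e.1.2 = u then φ.bwd e (cast (congrArg X h.symm) i) else 0))

theorem repUn_eq (g : GVec X E) (φ : GDual X E) (u : V) (i : X u) :
    repUn g φ u i = g (uIdx u i) + inMsg φ u i - φ.nd u := rfl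

variable [Fintype V] [∀ v, Fintype (X v)]

theorem sum_sum_dite_cast_mul (w : V) (F : X w → ℝ) (G : ∀ u, X u → ℝ) :
    ∑ u : V, ∑ i : X u, (if h : w = u then F (cast (congrArg X h.symm) i) else 0) * G u i
      = ∑ i : X w, F i * G w i := by
  rw [Finset.sum_eq_single w (fun u _ hne => ?_) (by simp)]
  · simp
  · simp [Ne.symm hne]

theorem sum_inMsg_mul (φ : GDual X E) (G : ∀ u, X u → ℝ) :
    ∑ u : V, ∑ i : X u, inMsg φ u i * G u i
      = ∑ e : {e : V × V // e ∈ E},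
          (∑ i : X e.1.1, φ.fwd e i * G e.1.1 i + ∑ j : X e.1.2, φ.bwd e j * G e.1.2 j) := by
  simp_rw [inMsg, Finset.sum_mul, add_mul]
  rw [Finset.sum_congr rfl fun u _ => Finset.sum_comm, Finset.sum_comm]
  simp_rw [Finset.sum_add_distrib, sum_sum_dite_cast_mul]

end Messages

theorem lift_mem_localPolytope [∀ v, Fintype (X v)] [∀ v, DecidableEq (X v)]
    (x : ∀ v, X v) : lift x ∈ localPolytope X E := by
  refine ⟨?_, rfl, fun u => ?_, fun e i => ?_, fun e j => ?_⟩
  · rintro (_ | ⟨v, i⟩ | ⟨e, i, j⟩) <;> simp only [lift] <;> positivity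
  · simp [lift, uIdx, cIdx]
  · by_cases h : x e.1.1 = i <;> simp [lift, uIdx, pIdx, h]
  · by_cases h : x e.1.2 = j <;> simp [lift, uIdx, pIdx, h]

section Duality

variable [∀ v, Fintype (X v)]

theorem sum_repPw_mul {g μ : GVec X E} (φ : GDual X E) (hμ : μ ∈ localPolytope X E) :
    ∑ e : {e : V × V // e ∈ E}, ∑ i : X e.1.1, ∑ j : X e.1.2, repPw g φ e i j * μ (pIdx e i j)
      = ∑ e : {e : V × V // e ∈ E}, ∑ i : X e.1.1, ∑ j : X e.1.2, g (pIdx e i j) * μ (pIdx e i j)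
        - ∑ e : {e : V × V // e ∈ E},
            (∑ i : X e.1.1, φ.fwd e i * μ (uIdx e.1.1 i)
              + ∑ j : X e.1.2, φ.bwd e j * μ (uIdx e.1.2 j)) := by
  simp_rw [repPw, sub_mul, Finset.sum_sub_distrib, ← Finset.mul_sum, hμ.2.2.2.1]
  rw [Finset.sum_congr rfl fun e _ =>
    Finset.sum_comm (f := fun i j => φ.bwd e j * μ (pIdx e i j))]
  simp_rw [← Finset.mul_sum, hμ.2.2.2.2, Finset.sum_add_distrib]
  ring

variable [Fintype V]

theorem dotp_eq_sum (f μ : GVec X E) :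
    dotp f μ = f cIdx * μ cIdx
      + ∑ u : V, ∑ i : X u, f (uIdx u i) * μ (uIdx u i)
      + ∑ e : {e : V × V // e ∈ E}, ∑ i : X e.1.1, ∑ j : X e.1.2,
          f (pIdx e i j) * μ (pIdx e i j) := by
  rw [dotp, Fintype.sum_sum_type, Fintype.sum_sum_type, ← add_assoc,
    ← Finset.univ_sigma_univ, Finset.sum_sigma, ← Finset.univ_sigma_univ, Finset.sum_sigma]
  simp_rw [Fintype.sum_prod_type, Fintype.sum_unique]
  rfl

theorem dotp_lift [∀ v, DecidableEq (X v)] (g : GVec X E) (x : ∀ v, X v) :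
    dotp g (lift x) = energy g x := by
  simp [dotp_eq_sum, energy, lift, cIdx, uIdx, pIdx, ite_and]

variable [DecidableEq V]

theorem sum_repUn_mul {g μ : GVec X E} (φ : GDual X E) (hμ : μ ∈ localPolytope X E) :
    ∑ u : V, ∑ i : X u, repUn g φ u i * μ (uIdx u i)
      = ∑ u : V, ∑ i : X u, g (uIdx u i) * μ (uIdx u i)
        + ∑ e : {e : V × V // e ∈ E},
            (∑ i : X e.1.1, φ.fwd e i * μ (uIdx e.1.1 i)
              + ∑ j : X e.1.2, φ.bwd e j * μ (uIdx e.1.2 j))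
        - ∑ u : V, φ.nd u := by
  simp_rw [repUn_eq, sub_mul, add_mul, Finset.sum_sub_distrib, Finset.sum_add_distrib,
    sum_inMsg_mul, ← Finset.mul_sum, hμ.2.2.1, hμ.2.1, mul_one]
  rw [Finset.sum_add_distrib]

theorem dotp_eq_repC_add (g : GVec X E) (φ : GDual X E) {μ : GVec X E}
    (hμ : μ ∈ localPolytope X E) :
    dotp g μ = repC g φ
      + ∑ u : V, ∑ i : X u, repUn g φ u i * μ (uIdx u i)
      + ∑ e : {e : V × V // e ∈ E}, ∑ i : X e.1.1, ∑ j : X e.1.2,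
          repPw g φ e i j * μ (pIdx e i j) := by
  rw [dotp_eq_sum, sum_repUn_mul φ hμ, sum_repPw_mul φ hμ, repC, hμ.2.1]
  ring

theorem repC_le_dotp {g μ : GVec X E} {φ : GDual X E} (hφ : DualFeasible g φ)
    (hμ : μ ∈ localPolytope X E) : repC g φ ≤ dotp g μ := by
  have hUn : 0 ≤ ∑ u : V, ∑ i : X u, repUn g φ u i * μ (uIdx u i) :=
    Finset.sum_nonneg fun u _ => Finset.sum_nonneg fun i _ => mul_nonneg (hφ.1 u i) (hμ.1 _)
  have hPw : 0 ≤ ∑ e : {e : V × V // e ∈ E}, ∑ i : X e.1.1, ∑ j : X e.1.2,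
      repPw g φ e i j * μ (pIdx e i j) :=
    Finset.sum_nonneg fun e _ => Finset.sum_nonneg fun i _ => Finset.sum_nonneg fun j _ =>
      mul_nonneg (hφ.2 e i j) (hμ.1 _)
  rw [dotp_eq_repC_add g φ hμ]
  linarith

theorem energy_eq_repC_add (g : GVec X E) (φ : GDual X E) (x : ∀ v, X v) :
    energy g x = repC g φ + ∑ u : V, repUn g φ u (x u)
      + ∑ e : {e : V × V // e ∈ E}, repPw g φ e (x e.1.1) (x e.1.2) := by
  classical
  rw [← dotp_lift, dotp_eq_repC_add g φ (lift_mem_localPolytope x)]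
  simp [lift, uIdx, pIdx, ite_and]

end Duality

/-- With zeros of `G - F - B` at `(i₀, j)` and `(i, j₀)`, nonnegativity at `(i₀, j₀)` and the
block form of `G` give `F i + B j ≥ 0`. -/
theorem reparam_eq_zero_of_notMem {α β : Type*} {Yu : Finset α} {Yv : Finset β}
    {G : α → β → ℝ} {F : α → ℝ} {B : β → ℝ} (d : α → ℝ) (c : β → ℝ)
    (hAB : ∀ i j, i ∉ Yu → j ∉ Yv → G i j = 0)
    (hYB : ∀ i j, i ∈ Yu → j ∉ Yv → G i j = d i)
    (hAY : ∀ i j, i ∉ Yu → j ∈ Yv → G i j = c j)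
    (hYY : ∀ i j, i ∈ Yu → j ∈ Yv → G i j ≤ c j + d i)
    (hrow : ∀ j, (∀ i, 0 ≤ G i j - F i - B j) ∧ ∃ i, G i j - F i - B j = 0)
    (hcol : ∀ i, ∃ j, G i j - F i - B j = 0)
    {i : α} {j : β} (hi : i ∉ Yu) (hj : j ∉ Yv) :
    G i j - F i - B j = 0 := by
  obtain ⟨i₀, hi₀⟩ := (hrow j).2
  obtain ⟨j₀, hj₀⟩ := hcol i
  have h₀ := (hrow j₀).1 i₀
  have hij := (hrow j).1 i
  rw [hAB i j hi hj] at hij ⊢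
  by_cases hi₀Y : i₀ ∈ Yu <;> by_cases hj₀Y : j₀ ∈ Yv
  · have := hYY i₀ j₀ hi₀Y hj₀Y
    rw [hYB i₀ j hi₀Y hj] at hi₀
    rw [hAY i j₀ hi hj₀Y] at hj₀
    linarith
  · rw [hYB i₀ j hi₀Y hj] at hi₀
    rw [hAB i j₀ hi hj₀Y] at hj₀
    rw [hYB i₀ j₀ hi₀Y hj₀Y] at h₀
    linarith
  · rw [hAB i₀ j hi₀Y hj] at hi₀
    rw [hAY i j₀ hi hj₀Y] at hj₀
    rw [hAY i₀ j₀ hi₀Y hj₀Y] at h₀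
    linarith
  · rw [hAB i₀ j hi₀Y hj] at hi₀
    rw [hAB i j₀ hi hj₀Y] at hj₀
    rw [hAB i₀ j₀ hi₀Y hj₀Y] at h₀
    linarith

section ReducedCost

variable [∀ v, DecidableEq (X v)]

theorem reduced_cIdx (f : GVec X E) (y : ∀ v, X v) (Y : ∀ v, Finset (X v)) :
    reduced f y Y cIdx = 0 := rfl

theorem reduced_uIdx_of_notMem (f : GVec X E) (y : ∀ v, X v) {Y : ∀ v, Finset (X v)}
    {v : V} {i : X v} (hi : i ∉ Y v) : reduced f y Y (uIdx v i) = 0 := by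
  simp [reduced, uIdx, Padj, subToOne, hi]

theorem reduced_pIdx_shape (f : GVec X E) (y : ∀ v, X v) (Y : ∀ v, Finset (X v))
    (e : {e : V × V // e ∈ E}) :
    ∃ (d : X e.1.1 → ℝ) (c : X e.1.2 → ℝ) (h : X e.1.1 → X e.1.2 → ℝ), ∀ i j,
      reduced f y Y (pIdx e i j) =
        if i ∈ Y e.1.1 then (if j ∈ Y e.1.2 then min (c j + d i) (h i j) else d i)
        else if j ∈ Y e.1.2 then c j else 0 :=
  ⟨_, _, _, fun _ _ => rfl⟩

theorem reduced_pIdx_of_notMem (f : GVec X E) (y : ∀ v, X v) {Y : ∀ v, Finset (X v)}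
    {e : {e : V × V // e ∈ E}} {i : X e.1.1} {j : X e.1.2} (hi : i ∉ Y e.1.1)
    (hj : j ∉ Y e.1.2) : reduced f y Y (pIdx e i j) = 0 := by
  obtain ⟨_, _, _, hshape⟩ := reduced_pIdx_shape f y Y e
  simp [hshape, hi, hj]

theorem energy_reduced_eq_zero [Fintype V] (f : GVec X E) (y : ∀ v, X v)
    {Y : ∀ v, Finset (X v)} {x : ∀ v, X v} (hx : ∀ v, x v ∉ Y v) :
    energy (reduced f y Y) x = 0 := by
  simp [energy, reduced_cIdx, reduced_uIdx_of_notMem f y (hx _),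
    reduced_pIdx_of_notMem f y (hx _) (hx _)]

theorem repPw_reduced_eq_zero (f : GVec X E) (y : ∀ v, X v) {Y : ∀ v, Finset (X v)}
    [DecidableEq V] (φ : GDual X E) {e : {e : V × V // e ∈ E}}
    (hrow : ∀ j, (∀ i, 0 ≤ repPw (reduced f y Y) φ e i j) ∧
      ∃ i, repPw (reduced f y Y) φ e i j = 0)
    (hcol : ∀ i, ∃ j, repPw (reduced f y Y) φ e i j = 0)
    {i : X e.1.1} {j : X e.1.2} (hi : i ∉ Y e.1.1) (hj : j ∉ Y e.1.2) :
    repPw (reduced f y Y) φ e i j = 0 := by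
  obtain ⟨d, c, _, hshape⟩ := reduced_pIdx_shape f y Y e
  refine reparam_eq_zero_of_notMem (G := fun i j => reduced f y Y (pIdx e i j)) d c
    (fun i' j' hi' hj' => ?_) (fun i' j' hi' hj' => ?_) (fun i' j' hi' hj' => ?_)
    (fun i' j' hi' hj' => ?_) hrow hcol hi hj <;> simp [hshape, hi', hj']

end ReducedCost

end

variable {V : Type*} [Fintype V] [DecidableEq V]
variable {X : V → Type*} [∀ v, Fintype (X v)] [∀ v, DecidableEq (X v)]
variable {E : Finset (V × V)}

theorem corrected_dual_optimal_or_prunable_general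
    (f : GVec X E) (y : ∀ v, X v) (Y : ∀ v, Finset (X v)) (hY : ∀ v, y v ∉ Y v)
    (gb : GVec X E) (hgb : gb = reduced f y Y)
    (φ : GDual X E)
    (hminU : ∀ u : V, (∀ i : X u, 0 ≤ repUn gb φ u i) ∧ ∃ i : X u, repUn gb φ u i = 0)
    (hminRow : ∀ (e : {e : V × V // e ∈ E}) (j : X e.1.2),
      (∀ i' : X e.1.1, 0 ≤ repPw gb φ e i' j) ∧ ∃ i' : X e.1.1, repPw gb φ e i' j = 0)
    (hminCol : ∀ (e : {e : V × V // e ∈ E}) (i : X e.1.1),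
      (∀ j' : X e.1.2, 0 ≤ repPw gb φ e i j') ∧ ∃ j' : X e.1.2, repPw gb φ e i j' = 0) :
    (repC gb φ = 0 ∧
      IsLeast ((fun μ => dotp gb μ) '' localPolytope X E) (repC gb φ) ∧
      dotp gb (lift y) = 0 ∧
      IsLeast ((fun μ => dotp gb μ) '' localPolytope X E) (dotp gb (lift y))) ∨
    ∃ u : V, ∃ i ∈ Y u, repUn gb φ u i = 0 := by
  by_cases hpruned : ∃ u : V, ∃ i ∈ Y u, repUn gb φ u i = 0
  · exact Or.inr hpruned
  refine Or.inl ?_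
  subst hgb
  choose x hx using fun u => (hminU u).2
  have hxY : ∀ u, x u ∉ Y u := fun u hu => hpruned ⟨u, x u, hu, hx u⟩
  have hC : repC (reduced f y Y) φ = 0 := by
    have h := energy_eq_repC_add (reduced f y Y) φ x
    rwa [energy_reduced_eq_zero f y hxY, Finset.sum_eq_zero fun u _ => hx u,
      Finset.sum_eq_zero fun e _ => repPw_reduced_eq_zero f y φ (hminRow e)
        (fun i => (hminCol e i).2) (hxY _) (hxY _), add_zero, add_zero, eq_comm] at h
  have hy : dotp (reduced f y Y) (lift y) = 0 := by
    rw [dotp_lift, energy_reduced_eq_zero f y hY]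
  have hfeas : DualFeasible (reduced f y Y) φ :=
    ⟨fun u => (hminU u).1, fun e i j => (hminCol e i).1 j⟩
  have hlower : repC (reduced f y Y) φ ∈
      lowerBounds ((fun μ => dotp (reduced f y Y) μ) '' localPolytope X E) := by
    rintro _ ⟨μ, hμ, rfl⟩
    exact repC_le_dotp hfeas hμ
  exact ⟨hC, ⟨⟨lift y, lift_mem_localPolytope y, hy.trans hC.symm⟩, hlower⟩, hy,
    ⟨⟨lift y, lift_mem_localPolytope y, rfl⟩, hy ▸ hC ▸ hlower⟩⟩

theorem corrected_dual_optimal_or_prunable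
    [∀ v, Nonempty (X v)]
    (f : GVec X E) (y : ∀ v, X v) (Y : ∀ v, Finset (X v)) (hY : ∀ v, y v ∉ Y v)
    (gb : GVec X E) (hgb : gb = reduced f y Y)
    (φ : GDual X E)
    (hminU : ∀ u : V, (∀ i : X u, 0 ≤ repUn gb φ u i) ∧ ∃ i : X u, repUn gb φ u i = 0)
    (hminRow : ∀ (e : {e : V × V // e ∈ E}) (j : X e.1.2),
      (∀ i' : X e.1.1, 0 ≤ repPw gb φ e i' j) ∧ ∃ i' : X e.1.1, repPw gb φ e i' j = 0)
    (hminCol : ∀ (e : {e : V × V // e ∈ E}) (i : X e.1.1),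
      (∀ j' : X e.1.2, 0 ≤ repPw gb φ e i j') ∧ ∃ j' : X e.1.2, repPw gb φ e i j' = 0) :
    (repC gb φ = 0 ∧
      IsLeast ((fun μ => dotp gb μ) '' localPolytope X E) (repC gb φ) ∧
      dotp gb (lift y) = 0 ∧
      IsLeast ((fun μ => dotp gb μ) '' localPolytope X E) (dotp gb (lift y))) ∨
    ∃ u : V, ∃ i ∈ Y u, repUn gb φ u i = 0 :=
  corrected_dual_optimal_or_prunable_general f y Y hY gb hgb φ hminU hminRow hminCol
end

section
/- Let Λ be the local polytope, q a node-wise substitution, and g a cost vector. Define Δ⁺ ∈ ℝ^I with zero constant and unary components and pairwise components Δ⁺_{uv}(i,j) = max{0, g_{uv}(i,j) + g_{uv}(q_u(i), q_v(j)) − g_{uv}(i, q_v(j)) − g_{uv}(q_u(i), j)}, and set ḡ = g − Δ⁺. Then q is strictly Λ-improving for g (q ∈ S_g) if and only if q is strictly Λ-improving for ḡ (q ∈ S_ḡ). -/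
open Finset

noncomputable section

variable {V : Type*} [Fintype V] [DecidableEq V]
variable {X : V → Type*} [∀ v, Fintype (X v)] [∀ v, DecidableEq (X v)]
variable {E : Finset (V × V)}

section AuxReduction
set_option linter.unusedSectionVars false

/-- The quantity whose positive part is truncated. -/
def qA (g : GVec X E) (q : ∀ v, X v → X v) (e : {e : V × V // e ∈ E})
    (i : X e.1.1) (j : X e.1.2) : ℝ :=
  g (pIdx e i j) + g (pIdx e (q e.1.1 i) (q e.1.2 j)) -
    g (pIdx e i (q e.1.2 j)) - g (pIdx e (q e.1.1 i) j)

/-- The mass-transport kernel used to repair a relaxed labeling. -/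
def qker (g : GVec X E) (q : ∀ v, X v → X v) (e : {e : V × V // e ∈ E})
    (i' : X e.1.1) (j' : X e.1.2) (i : X e.1.1) (j : X e.1.2) : ℝ :=
  if 0 < qA g q e i' j' then
    (if i' = i then 1 else 0) * (if q e.1.2 j' = j then 1 else 0) +
      (if q e.1.1 i' = i then 1 else 0) * (if j' = j then 1 else 0)
  else
    (if i' = i then 1 else 0) * (if j' = j then 1 else 0) +
      (if q e.1.1 i' = i then 1 else 0) * (if q e.1.2 j' = j then 1 else 0)

/-- The repaired relaxed labeling `ν`. -/
def nuVec (g : GVec X E) (q : ∀ v, X v → X v) (μ : GVec X E) : GVec X E := fun idx =>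
  match idx with
  | Sum.inl _ => μ cIdx
  | Sum.inr (Sum.inl ⟨v, i⟩) =>
      (μ (uIdx v i) + ∑ i' : X v, if q v i' = i then μ (uIdx v i') else 0) / 2
  | Sum.inr (Sum.inr ⟨e, (i, j)⟩) =>
      (∑ i' : X e.1.1, ∑ j' : X e.1.2, qker g q e i' j' i j * μ (pIdx e i' j')) / 2

lemma dotp_expand (f μ : GVec X E) :
    dotp f μ = f cIdx * μ cIdx + (∑ v : V, ∑ i : X v, f (uIdx v i) * μ (uIdx v i)) +
      ∑ e : {e : V × V // e ∈ E}, ∑ i : X e.1.1, ∑ j : X e.1.2,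
        f (pIdx e i j) * μ (pIdx e i j) := by
  unfold dotp
  rw [Fintype.sum_sum_type, Fintype.sum_sum_type, ← Finset.univ_sigma_univ, Finset.sum_sigma,
    ← Finset.univ_sigma_univ, Finset.sum_sigma]
  simp only [Fintype.sum_prod_type, Fintype.sum_unique]
  rw [← add_assoc]
  rfl

lemma qker_nonneg (g : GVec X E) (q : ∀ v, X v → X v) (e : {e : V × V // e ∈ E})
    (i' : X e.1.1) (j' : X e.1.2) (i : X e.1.1) (j : X e.1.2) :
    0 ≤ qker g q e i' j' i j := by
  unfold qker
  split <;> positivity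

lemma qker_sum_j (g : GVec X E) (q : ∀ v, X v → X v) (e : {e : V × V // e ∈ E})
    (i' : X e.1.1) (j' : X e.1.2) (i : X e.1.1) :
    ∑ j : X e.1.2, qker g q e i' j' i j =
      (if i' = i then 1 else 0) + (if q e.1.1 i' = i then 1 else 0) := by
  unfold qker
  split <;> simp [Finset.sum_add_distrib, ← Finset.mul_sum, Finset.sum_ite_eq]

lemma qker_sum_i (g : GVec X E) (q : ∀ v, X v → X v) (e : {e : V × V // e ∈ E})
    (i' : X e.1.1) (j' : X e.1.2) (j : X e.1.2) :
    ∑ i : X e.1.1, qker g q e i' j' i j =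
      (if j' = j then 1 else 0) + (if q e.1.2 j' = j then 1 else 0) := by
  unfold qker
  split <;>
    · simp [Finset.sum_add_distrib, ← Finset.sum_mul, Finset.sum_ite_eq]
      try ring


lemma hdiff_c (q : ∀ v, X v → X v) (f : GVec X E) : (f - Padj q f) cIdx = 0 := by
  show f cIdx - Padj q f cIdx = 0
  show f cIdx - f cIdx = 0
  ring

lemma hdiff_u (q : ∀ v, X v → X v) (f : GVec X E) (v : V) (i : X v) :
    (f - Padj q f) (uIdx v i) = f (uIdx v i) - f (uIdx v (q v i)) := rfl

lemma hdiff_p (q : ∀ v, X v → X v) (f : GVec X E) (e : {e : V × V // e ∈ E})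
    (i : X e.1.1) (j : X e.1.2) :
    (f - Padj q f) (pIdx e i j) = f (pIdx e i j) - f (pIdx e (q e.1.1 i) (q e.1.2 j)) := rfl

lemma hdiff_u_fix (q : ∀ v, X v → X v) (hidem : NodewiseIdem q) (f : GVec X E)
    (v : V) (i : X v) : (f - Padj q f) (uIdx v (q v i)) = 0 := by
  rw [hdiff_u, hidem, sub_self]

lemma hdiff_p_fix (q : ∀ v, X v → X v) (hidem : NodewiseIdem q) (f : GVec X E)
    (e : {e : V × V // e ∈ E}) (i : X e.1.1) (j : X e.1.2) :
    (f - Padj q f) (pIdx e (q e.1.1 i) (q e.1.2 j)) = 0 := by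
  rw [hdiff_p, hidem, hidem, sub_self]

end AuxReduction

lemma pick_pair (f : GVec X E) (e : {e : V × V // e ∈ E}) (a : X e.1.1) (b : X e.1.2) :
    ∑ i : X e.1.1, ∑ j : X e.1.2,
      f (pIdx e i j) * ((if a = i then (1:ℝ) else 0) * (if b = j then 1 else 0)) =
      f (pIdx e a b) := by
  simp [mul_ite, mul_zero, mul_one, Finset.sum_ite_eq]

lemma qker_cost (q : ∀ v, X v → X v) (hidem : NodewiseIdem q)
    (g gbar : GVec X E)
    (hbarp : ∀ (e : {e : V × V // e ∈ E}) (i : X e.1.1) (j : X e.1.2),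
      gbar (pIdx e i j) = g (pIdx e i j) - max 0 (qA g q e i j))
    (e : {e : V × V // e ∈ E}) (i' : X e.1.1) (j' : X e.1.2) :
    ∑ i : X e.1.1, ∑ j : X e.1.2,
      (g - Padj q g) (pIdx e i j) * qker g q e i' j' i j =
      (gbar - Padj q gbar) (pIdx e i' j') := by
  have hA0 : qA g q e (q e.1.1 i') (q e.1.2 j') = 0 := by
    unfold qA; rw [hidem, hidem]; ring
  have hrhs : (gbar - Padj q gbar) (pIdx e i' j') =
      (g - Padj q g) (pIdx e i' j') - max 0 (qA g q e i' j') := by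
    rw [hdiff_p, hdiff_p, hbarp, hbarp, hA0]
    simp only [max_self, max_eq_left (le_refl (0:ℝ))]
    ring
  rw [hrhs]
  unfold qker
  by_cases hA : 0 < qA g q e i' j'
  · simp only [if_pos hA, mul_add]
    rw [Finset.sum_congr rfl (fun i _ => Finset.sum_add_distrib), Finset.sum_add_distrib,
      pick_pair, pick_pair]
    rw [max_eq_right hA.le]
    rw [hdiff_p, hdiff_p, hdiff_p, hidem, hidem]
    unfold qA
    ring
  · simp only [if_neg hA, mul_add]
    rw [Finset.sum_congr rfl (fun i _ => Finset.sum_add_distrib), Finset.sum_add_distrib,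
      pick_pair, pick_pair]
    rw [max_eq_left (not_lt.mp hA)]
    rw [hdiff_p_fix q hidem]
    ring

lemma nuVec_mem (g : GVec X E) (q : ∀ v, X v → X v) (μ : GVec X E)
    (hμ : μ ∈ localPolytope X E) : nuVec g q μ ∈ localPolytope X E := by
  obtain ⟨hnn, hc, hu, hef, heb⟩ := hμ
  refine ⟨?_, ?_, ?_, ?_, ?_⟩
  · rintro (u | ⟨v, i⟩ | ⟨e, i, j⟩)
    · exact hnn cIdx
    · show 0 ≤ (μ (uIdx v i) + ∑ i' : X v, if q v i' = i then μ (uIdx v i') else 0) / 2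
      have h1 : 0 ≤ ∑ i' : X v, if q v i' = i then μ (uIdx v i') else 0 :=
        Finset.sum_nonneg fun i' _ => by split; exacts [hnn _, le_refl 0]
      have h2 := hnn (uIdx v i)
      linarith
    · show 0 ≤ (∑ i' : X e.1.1, ∑ j' : X e.1.2, qker g q e i' j' i j * μ (pIdx e i' j')) / 2
      have h1 : 0 ≤ ∑ i' : X e.1.1, ∑ j' : X e.1.2, qker g q e i' j' i j * μ (pIdx e i' j') :=
        Finset.sum_nonneg fun i' _ => Finset.sum_nonneg fun j' _ =>
          mul_nonneg (qker_nonneg g q e i' j' i j) (hnn _)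
      linarith
  · exact hc
  · intro u
    show (∑ i : X u, (μ (uIdx u i) + ∑ i' : X u, if q u i' = i then μ (uIdx u i') else 0) / 2)
      = μ cIdx
    rw [← Finset.sum_div, Finset.sum_add_distrib, hu u, Finset.sum_comm]
    have h1 : ∀ i' : X u, (∑ i : X u, if q u i' = i then μ (uIdx u i') else 0)
        = μ (uIdx u i') := by
      intro i'; simp [Finset.sum_ite_eq]
    rw [Finset.sum_congr rfl fun i' _ => h1 i', hu u]
    ring
  · intro e i
    show (∑ j : X e.1.2,
        (∑ i' : X e.1.1, ∑ j' : X e.1.2, qker g q e i' j' i j * μ (pIdx e i' j')) / 2)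
      = (μ (uIdx e.1.1 i) + ∑ i' : X e.1.1, if q e.1.1 i' = i then μ (uIdx e.1.1 i') else 0) / 2
    rw [← Finset.sum_div]
    congr 1
    rw [Finset.sum_comm]
    have key : ∀ i' : X e.1.1,
        (∑ j : X e.1.2, ∑ j' : X e.1.2, qker g q e i' j' i j * μ (pIdx e i' j'))
          = ((if i' = i then 1 else 0) + (if q e.1.1 i' = i then 1 else 0))
              * μ (uIdx e.1.1 i') := by
      intro i'
      rw [Finset.sum_comm]
      have h2 : ∀ j' : X e.1.2,
          (∑ j : X e.1.2, qker g q e i' j' i j * μ (pIdx e i' j'))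
            = ((if i' = i then 1 else 0) + (if q e.1.1 i' = i then 1 else 0))
                * μ (pIdx e i' j') := by
        intro j'; rw [← Finset.sum_mul, qker_sum_j]
      rw [Finset.sum_congr rfl fun j' _ => h2 j', ← Finset.mul_sum, hef e i']
    rw [Finset.sum_congr rfl fun i' _ => key i']
    simp only [add_mul, ite_mul, one_mul, zero_mul, Finset.sum_add_distrib, Finset.sum_ite_eq,
      Finset.sum_ite_eq', Finset.mem_univ, if_true]
  · intro e j
    show (∑ i : X e.1.1,
        (∑ i' : X e.1.1, ∑ j' : X e.1.2, qker g q e i' j' i j * μ (pIdx e i' j')) / 2)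
      = (μ (uIdx e.1.2 j) + ∑ j' : X e.1.2, if q e.1.2 j' = j then μ (uIdx e.1.2 j') else 0) / 2
    rw [← Finset.sum_div]
    congr 1
    rw [Finset.sum_comm]
    have key : ∀ i' : X e.1.1,
        (∑ i : X e.1.1, ∑ j' : X e.1.2, qker g q e i' j' i j * μ (pIdx e i' j'))
          = ∑ j' : X e.1.2,
              ((if j' = j then 1 else 0) + (if q e.1.2 j' = j then 1 else 0))
                * μ (pIdx e i' j') := by
      intro i'
      rw [Finset.sum_comm]
      refine Finset.sum_congr rfl fun j' _ => ?_
      rw [← Finset.sum_mul, qker_sum_i]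
    rw [Finset.sum_congr rfl fun i' _ => key i', Finset.sum_comm]
    have h3 : ∀ j' : X e.1.2,
        (∑ i' : X e.1.1,
            ((if j' = j then 1 else 0) + (if q e.1.2 j' = j then 1 else 0)) * μ (pIdx e i' j'))
          = ((if j' = j then 1 else 0) + (if q e.1.2 j' = j then 1 else 0))
              * μ (uIdx e.1.2 j') := by
      intro j'; rw [← Finset.mul_sum, heb e j']
    rw [Finset.sum_congr rfl fun j' _ => h3 j']
    simp only [add_mul, ite_mul, one_mul, zero_mul, Finset.sum_add_distrib, Finset.sum_ite_eq,
      Finset.sum_ite_eq', Finset.mem_univ, if_true]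

lemma hbar_u (q : ∀ v, X v → X v) (g gbar : GVec X E)
    (hbaru : ∀ (v : V) (i : X v), gbar (uIdx v i) = g (uIdx v i)) (v : V) (i : X v) :
    (gbar - Padj q gbar) (uIdx v i) = (g - Padj q g) (uIdx v i) := by
  rw [hdiff_u, hdiff_u, hbaru, hbaru]

lemma hbar_p (q : ∀ v, X v → X v) (hidem : NodewiseIdem q) (g gbar : GVec X E)
    (hbarp : ∀ (e : {e : V × V // e ∈ E}) (i : X e.1.1) (j : X e.1.2),
      gbar (pIdx e i j) = g (pIdx e i j) - max 0 (qA g q e i j))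
    (e : {e : V × V // e ∈ E}) (i : X e.1.1) (j : X e.1.2) :
    (gbar - Padj q gbar) (pIdx e i j) =
      (g - Padj q g) (pIdx e i j) - max 0 (qA g q e i j) := by
  have hA0 : qA g q e (q e.1.1 i) (q e.1.2 j) = 0 := by
    unfold qA; rw [hidem, hidem]; ring
  rw [hdiff_p, hdiff_p, hbarp, hbarp, hA0]
  simp only [max_self, max_eq_left (le_refl (0:ℝ))]
  ring

lemma dotp_nuVec (q : ∀ v, X v → X v) (hidem : NodewiseIdem q) (g gbar : GVec X E)
    (hbaru : ∀ (v : V) (i : X v), gbar (uIdx v i) = g (uIdx v i))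
    (hbarp : ∀ (e : {e : V × V // e ∈ E}) (i : X e.1.1) (j : X e.1.2),
      gbar (pIdx e i j) = g (pIdx e i j) - max 0 (qA g q e i j))
    (μ : GVec X E) :
    2 * dotp (g - Padj q g) (nuVec g q μ) = dotp (gbar - Padj q gbar) μ := by
  rw [dotp_expand, dotp_expand, hdiff_c, hdiff_c]
  have unary_eq : ∀ v : V,
      2 * ∑ i : X v, (g - Padj q g) (uIdx v i) * nuVec g q μ (uIdx v i)
        = ∑ i : X v, (gbar - Padj q gbar) (uIdx v i) * μ (uIdx v i) := by
    intro v
    have step : ∀ i : X v,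
        2 * ((g - Padj q g) (uIdx v i) * nuVec g q μ (uIdx v i))
          = (g - Padj q g) (uIdx v i) * μ (uIdx v i) +
            ∑ i' : X v,
              if q v i' = i then (g - Padj q g) (uIdx v i) * μ (uIdx v i') else 0 := by
      intro i
      have : nuVec g q μ (uIdx v i)
          = (μ (uIdx v i) + ∑ i' : X v, if q v i' = i then μ (uIdx v i') else 0) / 2 := rfl
      rw [this]
      rw [show ∀ a s : ℝ, 2 * ((g - Padj q g) (uIdx v i) * ((a + s) / 2))
            = (g - Padj q g) (uIdx v i) * a + (g - Padj q g) (uIdx v i) * s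
          from fun a s => by ring]
      rw [Finset.mul_sum]
      simp only [mul_ite, mul_zero]
    rw [Finset.mul_sum, Finset.sum_congr rfl fun i _ => step i, Finset.sum_add_distrib]
    have z : (∑ i : X v, ∑ i' : X v,
        if q v i' = i then (g - Padj q g) (uIdx v i) * μ (uIdx v i') else 0) = 0 := by
      rw [Finset.sum_comm]
      refine Finset.sum_eq_zero fun i' _ => ?_
      rw [Finset.sum_ite_eq]
      simp only [Finset.mem_univ, if_true]
      rw [hdiff_u_fix q hidem, zero_mul]
    rw [z, add_zero]
    exact Finset.sum_congr rfl fun i _ => by rw [hbar_u q g gbar hbaru]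
  have pair_eq : ∀ e : {e : V × V // e ∈ E},
      2 * ∑ i : X e.1.1, ∑ j : X e.1.2,
          (g - Padj q g) (pIdx e i j) * nuVec g q μ (pIdx e i j)
        = ∑ i : X e.1.1, ∑ j : X e.1.2,
            (gbar - Padj q gbar) (pIdx e i j) * μ (pIdx e i j) := by
    intro e
    have step : ∀ (i : X e.1.1) (j : X e.1.2),
        2 * ((g - Padj q g) (pIdx e i j) * nuVec g q μ (pIdx e i j))
          = ∑ i' : X e.1.1, ∑ j' : X e.1.2,
              ((g - Padj q g) (pIdx e i j) * qker g q e i' j' i j) * μ (pIdx e i' j') := by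
      intro i j
      have hev : nuVec g q μ (pIdx e i j)
          = (∑ i' : X e.1.1, ∑ j' : X e.1.2, qker g q e i' j' i j * μ (pIdx e i' j')) / 2 := rfl
      rw [hev]
      rw [show ∀ s : ℝ, 2 * ((g - Padj q g) (pIdx e i j) * (s / 2))
            = (g - Padj q g) (pIdx e i j) * s from fun s => by ring]
      rw [Finset.mul_sum]
      exact Finset.sum_congr rfl fun i' _ => by
        rw [Finset.mul_sum]
        exact Finset.sum_congr rfl fun j' _ => by ring
    rw [Finset.mul_sum, Finset.sum_congr rfl fun i _ =>
      (Finset.mul_sum _ _ _).trans (Finset.sum_congr rfl fun j _ => step i j)]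
    rw [Finset.sum_congr rfl fun i _ => Finset.sum_comm, Finset.sum_comm]
    rw [Finset.sum_congr rfl fun i' _ => Finset.sum_congr rfl fun i _ => Finset.sum_comm]
    rw [Finset.sum_congr rfl fun i' _ => Finset.sum_comm]
    refine Finset.sum_congr rfl fun i' _ => Finset.sum_congr rfl fun j' _ => ?_
    rw [show (∑ i : X e.1.1, ∑ j : X e.1.2,
          ((g - Padj q g) (pIdx e i j) * qker g q e i' j' i j) * μ (pIdx e i' j'))
        = (∑ i : X e.1.1, ∑ j : X e.1.2,
            (g - Padj q g) (pIdx e i j) * qker g q e i' j' i j) * μ (pIdx e i' j') from by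
      rw [Finset.sum_mul]
      exact Finset.sum_congr rfl fun i _ => by rw [Finset.sum_mul]]
    rw [qker_cost q hidem g gbar hbarp e i' j']
  have hνc : nuVec g q μ cIdx = μ cIdx := rfl
  rw [hνc]
  rw [mul_add, mul_add, Finset.mul_sum, Finset.mul_sum]
  rw [Finset.sum_congr rfl fun v _ => unary_eq v, Finset.sum_congr rfl fun e _ => pair_eq e]
  ring

lemma pmap_fix_u (q : ∀ v, X v → X v) (hidem : NodewiseIdem q) (μ : GVec X E)
    (hfix : Pmap q μ = μ) (v : V) (i : X v) (hne : q v i ≠ i) : μ (uIdx v i) = 0 := by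
  have hμ := congrFun hfix (uIdx v i)
  have hev : Pmap q μ (uIdx v i)
      = ∑ i' : X v, if q v i' = i then μ (uIdx v i') else 0 := rfl
  rw [← hμ, hev]
  refine Finset.sum_eq_zero fun i' _ => ?_
  split
  · next h => exact absurd (by rw [← h, hidem, h]) hne
  · rfl

lemma pmap_fix_p (q : ∀ v, X v → X v) (hidem : NodewiseIdem q) (μ : GVec X E)
    (hfix : Pmap q μ = μ) (e : {e : V × V // e ∈ E}) (i : X e.1.1) (j : X e.1.2)
    (hne : ¬(q e.1.1 i = i ∧ q e.1.2 j = j)) : μ (pIdx e i j) = 0 := by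
  have hμ := congrFun hfix (pIdx e i j)
  have hev : Pmap q μ (pIdx e i j)
      = ∑ i' : X e.1.1, ∑ j' : X e.1.2,
          if q e.1.1 i' = i ∧ q e.1.2 j' = j then μ (pIdx e i' j') else 0 := rfl
  rw [← hμ, hev]
  refine Finset.sum_eq_zero fun i' _ => Finset.sum_eq_zero fun j' _ => ?_
  split
  · next h =>
    exact absurd ⟨by rw [← h.1, hidem, h.1], by rw [← h.2, hidem, h.2]⟩ hne
  · rfl

lemma dot_fixed (q : ∀ v, X v → X v) (hidem : NodewiseIdem q) (f μ : GVec X E)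
    (hfix : Pmap q μ = μ) : dotp (f - Padj q f) μ = 0 := by
  rw [dotp_expand, hdiff_c, zero_mul, zero_add]
  have hU : ∀ (v : V) (i : X v), (f - Padj q f) (uIdx v i) * μ (uIdx v i) = 0 := by
    intro v i
    by_cases hqi : q v i = i
    · rw [hdiff_u, hqi, sub_self, zero_mul]
    · rw [pmap_fix_u q hidem μ hfix v i hqi, mul_zero]
  have hP : ∀ (e : {e : V × V // e ∈ E}) (i : X e.1.1) (j : X e.1.2),
      (f - Padj q f) (pIdx e i j) * μ (pIdx e i j) = 0 := by
    intro e i j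
    by_cases hq2 : q e.1.1 i = i ∧ q e.1.2 j = j
    · rw [hdiff_p, hq2.1, hq2.2, sub_self, zero_mul]
    · rw [pmap_fix_p q hidem μ hfix e i j hq2, mul_zero]
  rw [Finset.sum_congr rfl fun v _ => Finset.sum_eq_zero fun i _ => hU v i,
    Finset.sum_congr rfl fun e _ =>
      Finset.sum_eq_zero fun i _ => Finset.sum_eq_zero fun j _ => hP e i j]
  simp

lemma dotp_hbar (q : ∀ v, X v → X v) (hidem : NodewiseIdem q) (g gbar : GVec X E)
    (hbaru : ∀ (v : V) (i : X v), gbar (uIdx v i) = g (uIdx v i))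
    (hbarp : ∀ (e : {e : V × V // e ∈ E}) (i : X e.1.1) (j : X e.1.2),
      gbar (pIdx e i j) = g (pIdx e i j) - max 0 (qA g q e i j))
    (μ : GVec X E) :
    dotp (gbar - Padj q gbar) μ = dotp (g - Padj q g) μ -
      ∑ e : {e : V × V // e ∈ E}, ∑ i : X e.1.1, ∑ j : X e.1.2,
        max 0 (qA g q e i j) * μ (pIdx e i j) := by
  rw [dotp_expand, dotp_expand, hdiff_c, hdiff_c]
  rw [Finset.sum_congr rfl fun v _ => Finset.sum_congr rfl fun i _ => by
    rw [hbar_u q g gbar hbaru]]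
  rw [Finset.sum_congr rfl fun e _ => Finset.sum_congr rfl fun i _ =>
    Finset.sum_congr rfl fun j _ => by
      rw [hbar_p q hidem g gbar hbarp, sub_mul]]
  simp only [Finset.sum_sub_distrib]
  ring

lemma mu_fixed (q : ∀ v, X v → X v) (hidem : NodewiseIdem q) (g μ : GVec X E)
    (hμ : μ ∈ localPolytope X E) (hfixν : Pmap q (nuVec g q μ) = nuVec g q μ) :
    Pmap q μ = μ := by
  obtain ⟨hnn, hc, hu, hef, heb⟩ := hμ
  have hu0 : ∀ (v : V) (i : X v), q v i ≠ i → μ (uIdx v i) = 0 := by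
    intro v i hne
    have hν := pmap_fix_u q hidem (nuVec g q μ) hfixν v i hne
    have hev : nuVec g q μ (uIdx v i)
        = (μ (uIdx v i) + ∑ i' : X v, if q v i' = i then μ (uIdx v i') else 0) / 2 := rfl
    rw [hev] at hν
    have hs : 0 ≤ ∑ i' : X v, if q v i' = i then μ (uIdx v i') else 0 :=
      Finset.sum_nonneg fun i' _ => by split; exacts [hnn _, le_refl 0]
    have := hnn (uIdx v i)
    linarith
  have hp0i : ∀ (e : {e : V × V // e ∈ E}) (i : X e.1.1) (j : X e.1.2),
      q e.1.1 i ≠ i → μ (pIdx e i j) = 0 := by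
    intro e i j hne
    have hm := hef e i
    rw [hu0 _ _ hne] at hm
    exact (Finset.sum_eq_zero_iff_of_nonneg fun j' _ => hnn _).mp hm j (Finset.mem_univ j)
  have hp0j : ∀ (e : {e : V × V // e ∈ E}) (i : X e.1.1) (j : X e.1.2),
      q e.1.2 j ≠ j → μ (pIdx e i j) = 0 := by
    intro e i j hne
    have hm := heb e j
    rw [hu0 _ _ hne] at hm
    exact (Finset.sum_eq_zero_iff_of_nonneg fun i' _ => hnn _).mp hm i (Finset.mem_univ i)
  funext idx
  rcases idx with u | ⟨v, i⟩ | ⟨e, i, j⟩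
  · rfl
  · show (∑ i' : X v, if q v i' = i then μ (uIdx v i') else 0) = μ (uIdx v i)
    by_cases hqi : q v i = i
    · rw [Finset.sum_eq_single i]
      · rw [if_pos hqi]
      · intro i' _ hne'
        split
        · next h => exact hu0 v i' fun hc => hne' (hc.symm.trans h)
        · rfl
      · intro h; exact absurd (Finset.mem_univ i) h
    · rw [hu0 v i hqi]
      refine Finset.sum_eq_zero fun i' _ => ?_
      split
      · next h => exact absurd (by rw [← h, hidem, h]) hqi
      · rfl
  · show (∑ i' : X e.1.1, ∑ j' : X e.1.2,
        if q e.1.1 i' = i ∧ q e.1.2 j' = j then μ (pIdx e i' j') else 0) = μ (pIdx e i j)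
    by_cases hq2 : q e.1.1 i = i ∧ q e.1.2 j = j
    · rw [Finset.sum_eq_single i]
      · rw [Finset.sum_eq_single j]
        · rw [if_pos hq2]
        · intro j' _ hne'
          split
          · next h => exact hp0j e i j' fun hc => hne' (hc.symm.trans h.2)
          · rfl
        · intro h; exact absurd (Finset.mem_univ j) h
      · intro i' _ hne'
        refine Finset.sum_eq_zero fun j' _ => ?_
        split
        · next h => exact hp0i e i' j' fun hc => hne' (hc.symm.trans h.1)
        · rfl
      · intro h; exact absurd (Finset.mem_univ i) h
    · have hz : μ (pIdx e i j) = 0 := by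
        rcases not_and_or.mp hq2 with h1 | h2
        · exact hp0i e i j h1
        · exact hp0j e i j h2
      rw [hz]
      refine Finset.sum_eq_zero fun i' _ => Finset.sum_eq_zero fun j' _ => ?_
      split
      · next h =>
          exact absurd ⟨by rw [← h.1, hidem, h.1], by rw [← h.2, hidem, h.2]⟩ hq2
      · rfl

theorem reduction_two_preserves_strict_improvement
    [∀ v, Nonempty (X v)]
    (q : ∀ v, X v → X v) (hidem : NodewiseIdem q)
    (g gbar : GVec X E)
    (hbarc : gbar cIdx = g cIdx)
    (hbaru : ∀ (v : V) (i : X v), gbar (uIdx v i) = g (uIdx v i))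
    (hbarp : ∀ (e : {e : V × V // e ∈ E}) (i : X e.1.1) (j : X e.1.2),
      gbar (pIdx e i j) =
        g (pIdx e i j) -
          max 0
            (g (pIdx e i j) + g (pIdx e (q e.1.1 i) (q e.1.2 j)) -
              g (pIdx e i (q e.1.2 j)) - g (pIdx e (q e.1.1 i) j))) :
    StrictlyLambdaImproving (localPolytope X E) g q ↔
      StrictlyLambdaImproving (localPolytope X E) gbar q := by
  have hbarp' : ∀ (e : {e : V × V // e ∈ E}) (i : X e.1.1) (j : X e.1.2),
      gbar (pIdx e i j) = g (pIdx e i j) - max 0 (qA g q e i j) := hbarp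
  constructor
  · rintro ⟨⟨⟨μ₀, hμ₀, h0⟩, hlb⟩, hmin⟩
    refine ⟨⟨⟨μ₀, hμ₀, dot_fixed q hidem gbar μ₀ (hmin μ₀ hμ₀ h0)⟩, ?_⟩, ?_⟩
    · rintro r ⟨μ, hμ, rfl⟩
      have hid := dotp_nuVec q hidem g gbar hbaru hbarp' μ
      have hge : 0 ≤ dotp (g - Padj q g) (nuVec g q μ) :=
        hlb ⟨nuVec g q μ, nuVec_mem g q μ hμ, rfl⟩
      linarith
    · intro μ hμ hz
      have hid := dotp_nuVec q hidem g gbar hbaru hbarp' μ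
      rw [hz] at hid
      have hν0 : dotp (g - Padj q g) (nuVec g q μ) = 0 := by linarith
      exact mu_fixed q hidem g μ hμ (hmin _ (nuVec_mem g q μ hμ) hν0)
  · rintro ⟨⟨⟨μ₀, hμ₀, h0⟩, hlb⟩, hmin⟩
    refine ⟨⟨⟨μ₀, hμ₀, dot_fixed q hidem g μ₀ (hmin μ₀ hμ₀ h0)⟩, ?_⟩, ?_⟩
    · rintro r ⟨μ, hμ, rfl⟩
      have hd := dotp_hbar q hidem g gbar hbaru hbarp' μ
      have hM : 0 ≤ ∑ e : {e : V × V // e ∈ E}, ∑ i : X e.1.1, ∑ j : X e.1.2,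
          max 0 (qA g q e i j) * μ (pIdx e i j) :=
        Finset.sum_nonneg fun e _ => Finset.sum_nonneg fun i _ =>
          Finset.sum_nonneg fun j _ => mul_nonneg (le_max_left 0 _) (hμ.1 _)
      have hb0 : 0 ≤ dotp (gbar - Padj q gbar) μ := hlb ⟨μ, hμ, rfl⟩
      linarith
    · intro μ hμ hz
      have hd := dotp_hbar q hidem g gbar hbaru hbarp' μ
      have hM : 0 ≤ ∑ e : {e : V × V // e ∈ E}, ∑ i : X e.1.1, ∑ j : X e.1.2,
          max 0 (qA g q e i j) * μ (pIdx e i j) :=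
        Finset.sum_nonneg fun e _ => Finset.sum_nonneg fun i _ =>
          Finset.sum_nonneg fun j _ => mul_nonneg (le_max_left 0 _) (hμ.1 _)
      have hb0 : 0 ≤ dotp (gbar - Padj q gbar) μ := hlb ⟨μ, hμ, rfl⟩
      exact hmin μ hμ (by linarith)


end
end
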